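/- Let A, B, C, D be 4×4 real matrices (viewed as maps ℝ⁴ → (ℝ⁴)'), and define operators on Schwartz functions on (ℝ⁴)' by Û_ν(φ)(x̂) = e^{2πi⟨Cν,x̂⟩}φ(x̂ − Aν) and U_μ(φ)(x̂) = e^{2πi⟨Bμ,x̂⟩}φ(x̂ − Dμ) for ν, μ ∈ ℤ⁴. Then the operators U_μ and Û_ν commute for all μ, ν if and only if the matrix B^t A − D^t C has integer entries (i.e., ⟨Bμ, Aν⟩ − ⟨Cν, Dμ⟩ ∈ ℤ for all μ, ν ∈ ℤ⁴). -/
import Mathlib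

open Complex Real

noncomputable def Wgen (b a : Fin 4 → ℝ) (φ : (Fin 4 → ℝ) → ℂ) : (Fin 4 → ℝ) → ℂ :=
  fun xh => Complex.exp ((2 * (π : ℂ) * I) * ((∑ i, b i * xh i : ℝ) : ℂ)) * φ (xh - a)

lemma Wgen_key (b a b' a' : Fin 4 → ℝ) :
    (∀ φ : (Fin 4 → ℝ) → ℂ, Wgen b a (Wgen b' a' φ) = Wgen b' a' (Wgen b a φ)) ↔
    ∃ k : ℤ, (∑ i, b i * a' i) - (∑ i, b' i * a i) = (k : ℝ) := by
  constructor
  · intro h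
    have h0 := congrFun (h (fun _ => 1)) 0
    simp only [Wgen, Pi.zero_apply, mul_zero, Finset.sum_const_zero, Complex.ofReal_zero,
      one_mul, mul_one, zero_sub, Pi.sub_apply, Pi.neg_apply, Complex.exp_zero] at h0
    rw [Complex.exp_eq_exp_iff_exists_int] at h0
    obtain ⟨n, hn⟩ := h0
    refine ⟨n, ?_⟩
    have hπ : (2 * (π : ℂ) * I) ≠ 0 := by
      simp [Real.pi_ne_zero, Complex.I_ne_zero]
    have : (2 * (π : ℂ) * I) * ((∑ i, b' i * (-a i) : ℝ) : ℂ)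
        = (2 * (π : ℂ) * I) * (((∑ i, b i * (-a' i) : ℝ) : ℂ) + n) := by
      rw [hn]; ring
    have h2 := mul_left_cancel₀ hπ this
    have h4 : (∑ i, b' i * (-a i) : ℝ) = ∑ i, b i * (-a' i) + (n : ℝ) := by
      exact_mod_cast h2
    have e1 : (∑ i, b' i * (-a i) : ℝ) = -∑ i, b' i * a i := by
      simp [mul_neg, Finset.sum_neg_distrib]
    have e2 : (∑ i, b i * (-a' i) : ℝ) = -∑ i, b i * a' i := by
      simp [mul_neg, Finset.sum_neg_distrib]
    rw [e1, e2] at h4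
    linarith
  · rintro ⟨k, hk⟩ φ
    funext x
    simp only [Wgen, Pi.sub_apply]
    have hx : (x - a) - a' = (x - a') - a := by
      funext i; simp; ring
    rw [hx, ← mul_assoc, ← mul_assoc, ← Complex.exp_add, ← Complex.exp_add]
    have hreal : (∑ i, b i * x i) + (∑ i, b' i * (x i - a i))
        = ((∑ i, b' i * x i) + (∑ i, b i * (x i - a' i))) + k := by
      have l1 : (∑ i, b' i * (x i - a i)) = (∑ i, b' i * x i) - ∑ i, b' i * a i := by
        rw [← Finset.sum_sub_distrib]; congr 1; funext i; ring
      have l2 : (∑ i, b i * (x i - a' i)) = (∑ i, b i * x i) - ∑ i, b i * a' i := by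
        rw [← Finset.sum_sub_distrib]; congr 1; funext i; ring
      rw [l1, l2]; linarith
    have hc : ((∑ i, b i * x i : ℝ) : ℂ) + ((∑ i, b' i * (x i - a i) : ℝ) : ℂ)
        = ((∑ i, b' i * x i : ℝ) : ℂ) + ((∑ i, b i * (x i - a' i) : ℝ) : ℂ) + (k : ℂ) := by
      exact_mod_cast congrArg (fun r : ℝ => (r : ℂ)) hreal
    have hS : (2 * (π : ℂ) * I) * ((∑ i, b i * x i : ℝ) : ℂ)
          + (2 * (π : ℂ) * I) * ((∑ i, b' i * (x i - a i) : ℝ) : ℂ)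
        = ((2 * (π : ℂ) * I) * ((∑ i, b' i * x i : ℝ) : ℂ)
          + (2 * (π : ℂ) * I) * ((∑ i, b i * (x i - a' i) : ℝ) : ℂ)) + (k : ℤ) * (2 * (π : ℂ) * I) := by
      linear_combination (2 * (π : ℂ) * I) * hc
    rw [hS, Complex.exp_add, Complex.exp_int_mul_two_pi_mul_I, mul_one]

/-- with `Û_ν φ(x̂) = e^{2πi⟨Cν,x̂⟩}φ(x̂ − Aν)` and
`U_μ φ(x̂) = e^{2πi⟨Bμ,x̂⟩}φ(x̂ − Dμ)` for `ν, μ ∈ ℤ⁴`, the operators `U_μ` and `Û_ν`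
commute for all `μ, ν` if and only if `BᵗA − DᵗC` has integer entries, i.e.
`⟨Bμ, Aν⟩ − ⟨Cν, Dμ⟩ ∈ ℤ` for all `μ, ν ∈ ℤ⁴`. -/
theorem U_commutes_iff_integrality
    (A B C D : (Fin 4 → ℝ) →ₗ[ℝ] (Fin 4 → ℝ)) :
    (∀ (μ ν : Fin 4 → ℤ) (φ : (Fin 4 → ℝ) → ℂ),
        Wgen (B fun i => (μ i : ℝ)) (D fun i => (μ i : ℝ))
            (Wgen (C fun i => (ν i : ℝ)) (A fun i => (ν i : ℝ)) φ) =
          Wgen (C fun i => (ν i : ℝ)) (A fun i => (ν i : ℝ))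
            (Wgen (B fun i => (μ i : ℝ)) (D fun i => (μ i : ℝ)) φ)) ↔
      (∀ μ ν : Fin 4 → ℤ, ∃ k : ℤ,
        (∑ i, (B fun i => (μ i : ℝ)) i * (A fun i => (ν i : ℝ)) i) -
          (∑ i, (C fun i => (ν i : ℝ)) i * (D fun i => (μ i : ℝ)) i) = (k : ℝ)) := by
  constructor
  · intro h μ ν
    exact (Wgen_key (B fun i => (μ i : ℝ)) (D fun i => (μ i : ℝ))
      (C fun i => (ν i : ℝ)) (A fun i => (ν i : ℝ))).mp (fun φ => h μ ν φ) 
  · intro h μ ν φ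
    exact (Wgen_key (B fun i => (μ i : ℝ)) (D fun i => (μ i : ℝ))
      (C fun i => (ν i : ℝ)) (A fun i => (ν i : ℝ))).mpr (h μ ν) φ
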